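/- Define f₁(B,P) = ‖B + PW − W‖ and f₂(B,P) = ‖P‖ on pairs (B,P) satisfying a fixed linear sparsity constraint (certain entries of [B|P] are zero). If (B₀,P₀) minimizes f₁ subject to f₂ ≤ ε₀ with 0 < ε₀ < 1, and the minimum value of f₁ is nonzero, then ‖P₀‖ = ε₀, i.e., the constraint is active at the optimum. -/

import Mathlib

/-!
If the constraint were slack, `‖P₀‖ = ε' < ε₀`, pull `(B₀, P₀)` towards `(0, I)`, whose residual is
zero: for `α = (1 - ε₀) / (1 - ε')` the pair `(α B₀, (1 - α) I + α P₀)` still respects the sparsity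
pattern and has `‖(1 - α) I + α P₀‖ ≤ (1 - α) + α ε' = ε₀`, while its residual is exactly
`α` times the residual of `(B₀, P₀)`. Since `α < 1`, this contradicts minimality unless the
minimum is zero.
-/

def Matrix.vanishingOn {m n R : Type*} [Semiring R] (χ : Set (m × n)) :
    Submodule R (Matrix m n R) where
  carrier := {X | ∀ p ∈ χ, X p.1 p.2 = 0}
  add_mem' hX hY p hp := by simp [hX p hp, hY p hp]
  zero_mem' _ _ := rfl
  smul_mem' c _ hX p hp := by simp [hX p hp]

theorem le_convexComb_of_subadditive_of_homogeneous {E : Type*} [AddCommGroup E] [Module ℝ E]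
    (N : E → ℝ) (hadd : ∀ x y, N (x + y) ≤ N x + N y) (hsmul : ∀ (c : ℝ) x, N (c • x) = |c| * N x)
    {α : ℝ} (hα₀ : 0 ≤ α) (hα₁ : α ≤ 1) (x y : E) :
    N ((1 - α) • x + α • y) ≤ (1 - α) * N x + α * N y := by
  calc N ((1 - α) • x + α • y) ≤ N ((1 - α) • x) + N (α • y) := hadd _ _
    _ = (1 - α) * N x + α * N y := by
      rw [hsmul, hsmul, abs_of_nonneg (sub_nonneg.mpr hα₁), abs_of_nonneg hα₀]

theorem Matrix.smul_add_convexComb_one_mul_sub {m n R : Type*} [Fintype m] [DecidableEq m]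
    [CommRing R] (α : R) (B W : Matrix m n R) (P : Matrix m m R) :
    α • B + ((1 - α) • (1 : Matrix m m R) + α • P) * W - W = α • (B + P * W - W) := by
  rw [Matrix.add_mul, Matrix.smul_mul, Matrix.smul_mul, Matrix.one_mul, smul_sub, smul_add,
    sub_smul, one_smul]
  abel

theorem exists_mem_Ioo_one_sub_add_mul_eq {ε ε₀ : ℝ} (hε : ε < ε₀) (hε₀ : ε₀ < 1) :
    ∃ α ∈ Set.Ioo (0 : ℝ) 1, 1 - α + α * ε = ε₀ := by
  have hpos : 0 < 1 - ε := by linarith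
  refine ⟨(1 - ε₀) / (1 - ε), ⟨div_pos (by linarith) hpos, (div_lt_one hpos).mpr (by linarith)⟩, ?_⟩
  field_simp
  ring

theorem constraint_active_at_optimum_general {M K : ℕ}
    (W : Matrix (Fin M) (Fin K) ℝ)
    -- the sparsity pattern: entries of B and of P forced to be zero
    (χB : Set (Fin M × Fin K)) (χP : Set (Fin M × Fin M))
    -- the identity is compatible with the sparsity pattern on P
    (hIfeas : ∀ p ∈ χP, (1 : Matrix (Fin M) (Fin M) ℝ) p.1 p.2 = 0)
    -- a matrix induced norm with ‖I‖ = 1: `nrmS` on square matrices, `nrmR`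
    -- on rectangular ones
    (nrmS : Matrix (Fin M) (Fin M) ℝ → ℝ) (nrmR : Matrix (Fin M) (Fin K) ℝ → ℝ)
    (htriS : ∀ A C : Matrix (Fin M) (Fin M) ℝ, nrmS (A + C) ≤ nrmS A + nrmS C)
    (hhomS : ∀ (c : ℝ) (A : Matrix (Fin M) (Fin M) ℝ), nrmS (c • A) = |c| * nrmS A)
    (honeS : nrmS 1 = 1)
    (hhomR : ∀ (c : ℝ) (A : Matrix (Fin M) (Fin K) ℝ), nrmR (c • A) = |c| * nrmR A)
    (hnonnegR : ∀ A, 0 ≤ nrmR A)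
    (ε₀ : ℝ) (hε₀lt : ε₀ < 1)
    (B₀ : Matrix (Fin M) (Fin K) ℝ) (P₀ : Matrix (Fin M) (Fin M) ℝ)
    -- (B₀, P₀) is feasible
    (hB₀ : ∀ p ∈ χB, B₀ p.1 p.2 = 0) (hP₀ : ∀ p ∈ χP, P₀ p.1 p.2 = 0)
    (hcon : nrmS P₀ ≤ ε₀)
    -- (B₀, P₀) minimizes f₁ = ‖B + PW − W‖ subject to f₂ = ‖P‖ ≤ ε₀
    (hmin : ∀ (B : Matrix (Fin M) (Fin K) ℝ) (P : Matrix (Fin M) (Fin M) ℝ),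
      (∀ p ∈ χB, B p.1 p.2 = 0) → (∀ p ∈ χP, P p.1 p.2 = 0) → nrmS P ≤ ε₀ →
        nrmR (B₀ + P₀ * W - W) ≤ nrmR (B + P * W - W))
    -- the minimum value of f₁ is nonzero
    (hne : nrmR (B₀ + P₀ * W - W) ≠ 0) :
    nrmS P₀ = ε₀ := by
  by_contra hslack
  obtain ⟨α, ⟨hα₀, hα₁⟩, hαε⟩ :=
    exists_mem_Ioo_one_sub_add_mul_eq (lt_of_le_of_ne hcon hslack) hε₀lt
  have hB : α • B₀ ∈ Matrix.vanishingOn (R := ℝ) χB := Submodule.smul_mem _ α hB₀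
  have hP : (1 - α) • 1 + α • P₀ ∈ Matrix.vanishingOn (R := ℝ) χP :=
    add_mem (Submodule.smul_mem _ _ hIfeas) (Submodule.smul_mem _ _ hP₀)
  have hPnorm : nrmS ((1 - α) • 1 + α • P₀) ≤ ε₀ := by
    have := le_convexComb_of_subadditive_of_homogeneous nrmS htriS hhomS hα₀.le hα₁.le 1 P₀
    rw [honeS, mul_one] at this
    linarith
  have hle := hmin _ _ hB hP hPnorm
  rw [Matrix.smul_add_convexComb_one_mul_sub, hhomR, abs_of_pos hα₀] at hle
  exact hne (by nlinarith [hnonnegR (B₀ + P₀ * W - W)])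

theorem constraint_active_at_optimum {M K : ℕ}
    (W : Matrix (Fin M) (Fin K) ℝ)
    -- the sparsity pattern: entries of B and of P forced to be zero
    (χB : Set (Fin M × Fin K)) (χP : Set (Fin M × Fin M))
    -- the identity is compatible with the sparsity pattern on P
    (hIfeas : ∀ p ∈ χP, (1 : Matrix (Fin M) (Fin M) ℝ) p.1 p.2 = 0)
    -- a matrix induced norm with ‖I‖ = 1: `nrmS` on square matrices, `nrmR`
    -- on rectangular ones
    (nrmS : Matrix (Fin M) (Fin M) ℝ → ℝ) (nrmR : Matrix (Fin M) (Fin K) ℝ → ℝ)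
    (htriS : ∀ A C : Matrix (Fin M) (Fin M) ℝ, nrmS (A + C) ≤ nrmS A + nrmS C)
    (hhomS : ∀ (c : ℝ) (A : Matrix (Fin M) (Fin M) ℝ), nrmS (c • A) = |c| * nrmS A)
    (honeS : nrmS 1 = 1)
    (hhomR : ∀ (c : ℝ) (A : Matrix (Fin M) (Fin K) ℝ), nrmR (c • A) = |c| * nrmR A)
    (hnonnegR : ∀ A, 0 ≤ nrmR A)
    (ε₀ : ℝ) (hε₀pos : 0 < ε₀) (hε₀lt : ε₀ < 1)
    (B₀ : Matrix (Fin M) (Fin K) ℝ) (P₀ : Matrix (Fin M) (Fin M) ℝ)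
    -- (B₀, P₀) is feasible
    (hB₀ : ∀ p ∈ χB, B₀ p.1 p.2 = 0) (hP₀ : ∀ p ∈ χP, P₀ p.1 p.2 = 0)
    (hcon : nrmS P₀ ≤ ε₀)
    -- (B₀, P₀) minimizes f₁ = ‖B + PW − W‖ subject to f₂ = ‖P‖ ≤ ε₀
    (hmin : ∀ (B : Matrix (Fin M) (Fin K) ℝ) (P : Matrix (Fin M) (Fin M) ℝ),
      (∀ p ∈ χB, B p.1 p.2 = 0) → (∀ p ∈ χP, P p.1 p.2 = 0) → nrmS P ≤ ε₀ →
        nrmR (B₀ + P₀ * W - W) ≤ nrmR (B + P * W - W))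
    -- the minimum value of f₁ is nonzero
    (hne : nrmR (B₀ + P₀ * W - W) ≠ 0) :
    nrmS P₀ = ε₀ :=
  constraint_active_at_optimum_general W χB χP hIfeas nrmS nrmR htriS hhomS honeS hhomR hnonnegR ε₀
    hε₀lt B₀ P₀ hB₀ hP₀ hcon hmin hne
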